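/- Let a, d, k be positive integers with gcd(a,d)=1 and 2 ≤ k ≤ a, let a−1 = q(k−1)+r with 0 ≤ r < k−1, and set a_k = a+(k−1)d. Define the polynomial P(x) = 1 + x^{a+d}·(Σ_{j=0}^{k−2} x^{jd})·(Σ_{s=0}^{q−1} x^{s a_k}) + x^{q a_k + a + d}·(Σ_{t=0}^{r−1} x^{td}). Then for every λ ∈ ℂ and every integer ν ≥ 0, Σ_{i=0}^{a−1} λ^{m_i} m_i^{ν} = Σ_{i=0}^{ν} S(ν,i) λ^{i} P^{(i)}(λ), where P^{(i)} denotes the i-th derivative of P and m_i is taken with respect to the sequence a, a+d, …, a+(k−1)d. -/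

import Mathlib

open Finset

/-- `n` is representable as a nonnegative integer combination of the `a i`. -/
def Representable {k : ℕ} (a : Fin k → ℕ) (n : ℕ) : Prop :=
  ∃ x : Fin k → ℕ, n = ∑ i, x i * a i

/-- Stirling numbers of the second kind,
`S(n,m) = (1/m!) Σ_{i=0}^{m} (−1)^i C(m,i)(m−i)^n`, as complex numbers. -/
noncomputable def stirling2 (n m : ℕ) : ℂ :=
  (1 / (m.factorial : ℂ)) *
    ∑ i ∈ Finset.range (m + 1), (-1 : ℂ) ^ i * (m.choose i : ℂ) * ((m - i : ℕ) : ℂ) ^ n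

/-!
With `θ = x d/dx` one has `θ^ν = Σ_i S(ν,i) x^i (d/dx)^i`, because `e^ν = Σ_i S(ν,i) e(e-1)⋯(e-i+1)`
(the Gregory–Newton expansion of `x^ν` at `0`); so the right-hand side is `(θ^ν P)(λ)`, and
`θ^ν x^e = e^ν x^e`. It remains to see `P = Σ_{i<a} x^{m_{id mod a}}`. A sum of `M` generators is
`Ma + Dd` with `D ≤ M(k-1)`, and conversely, so the least one in the class of `id` (with
`0 < i < a`, using `gcd(a,d) = 1`) is `⌈i/(k-1)⌉a + id`; `i ↦ id mod a` permutes the residues,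
and grouping the exponents `⌈i/(k-1)⌉a + id` by `⌈i/(k-1)⌉` gives the three terms of `P`.
-/

open Nat fwdDiff

theorem factorial_mul_stirling2 (n m : ℕ) :
    (m ! : ℂ) * stirling2 n m = Δ_[1] ^[m] (fun x : ℂ => x ^ n) 0 := by
  rw [stirling2, ← mul_assoc, mul_one_div_cancel (by exact_mod_cast m.factorial_ne_zero),
    one_mul, fwdDiff_iter_eq_sum_shift, ← sum_range_reflect]
  refine sum_congr rfl fun j hj => ?_
  have hj : j ≤ m := Nat.lt_succ_iff.mp (mem_range.mp hj)
  rw [add_tsub_cancel_right, Nat.sub_sub_self hj, Nat.choose_symm hj, zsmul_eq_mul]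
  push_cast [Nat.cast_sub hj]
  ring

theorem stirling2_eq_zero_of_lt {n m : ℕ} (h : n < m) : stirling2 n m = 0 := by
  have := factorial_mul_stirling2 n m
  rw [fwdDiff_iter_pow_eq_zero_of_lt h] at this
  simpa [Nat.factorial_ne_zero] using this

theorem sum_stirling2_mul_descFactorial (n e : ℕ) :
    ∑ i ∈ range (n + 1), stirling2 n i * (e.descFactorial i : ℂ) = (e : ℂ) ^ n := by
  set g : ℕ → ℂ := fun i => stirling2 n i * (e.descFactorial i : ℂ)
  have extend : ∀ N ≤ n + e, (∀ i, N < i → g i = 0) →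
      ∑ i ∈ range (N + 1), g i = ∑ i ∈ range (n + e + 1), g i := fun N hN hg =>
    sum_subset (range_subset_range.mpr (by omega)) fun i _ hi => hg i (by simpa using hi)
  have newton := shift_eq_sum_fwdDiff_iter (1 : ℂ) (fun x : ℂ => x ^ n) e 0
  simp only [zero_add, nsmul_eq_mul, mul_one, ← factorial_mul_stirling2] at newton
  rw [extend n (by omega) fun i hi => by simp [g, stirling2_eq_zero_of_lt hi], newton,
    ← extend e (by omega) fun i hi => by simp [g, Nat.descFactorial_eq_zero_iff_lt.mpr hi]]
  refine sum_congr rfl fun i _ => ?_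
  simp only [g, Nat.descFactorial_eq_factorial_mul_choose]
  push_cast
  ring

theorem sum_stirling2_mul_iteratedDeriv_pow (n e : ℕ) (x : ℂ) :
    ∑ i ∈ range (n + 1), stirling2 n i * x ^ i * iteratedDeriv i (· ^ e) x =
      x ^ e * (e : ℂ) ^ n := by
  have term : ∀ i, x ^ i * iteratedDeriv i (· ^ e) x = (e.descFactorial i : ℂ) * x ^ e := by
    intro i
    rw [iteratedDeriv_pow]
    rcases le_or_gt i e with hie | hei
    · rw [← Nat.add_sub_of_le hie, pow_add, Nat.add_sub_cancel_left]
      ring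
    · simp [Nat.descFactorial_eq_zero_iff_lt.mpr hei]
  calc ∑ i ∈ range (n + 1), stirling2 n i * x ^ i * iteratedDeriv i (· ^ e) x
      = ∑ i ∈ range (n + 1), stirling2 n i * (e.descFactorial i : ℂ) * x ^ e :=
        sum_congr rfl fun i _ => by rw [mul_assoc, term, ← mul_assoc]
    _ = x ^ e * (e : ℂ) ^ n := by rw [← sum_mul, sum_stirling2_mul_descFactorial, mul_comm]

theorem sum_stirling2_mul_iteratedDeriv_sum_pow {ι : Type*} (s : Finset ι) (E : ι → ℕ)
    (n : ℕ) (x : ℂ) :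
    ∑ i ∈ range (n + 1), stirling2 n i * x ^ i * iteratedDeriv i (fun y => ∑ j ∈ s, y ^ E j) x =
      ∑ j ∈ s, x ^ E j * (E j : ℂ) ^ n := by
  have linear : ∀ i, iteratedDeriv i (fun y => ∑ j ∈ s, y ^ E j) x =
      ∑ j ∈ s, iteratedDeriv i (· ^ E j) x := fun i =>
    iteratedDeriv_fun_sum fun j _ => contDiffAt_id.pow (E j)
  simp only [linear, mul_sum]
  rw [sum_comm]
  exact sum_congr rfl fun j _ => sum_stirling2_mul_iteratedDeriv_pow n (E j) x

section Representable

variable {k : ℕ} {g : Fin k → ℕ}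

theorem Representable.zero : Representable g 0 := ⟨0, by simp⟩

theorem Representable.add {m n : ℕ} (hm : Representable g m) (hn : Representable g n) :
    Representable g (m + n) := by
  obtain ⟨x, rfl⟩ := hm
  obtain ⟨y, rfl⟩ := hn
  exact ⟨x + y, by simp only [Pi.add_apply, add_mul, sum_add_distrib]⟩

theorem Representable.generator (j : Fin k) : Representable g (g j) :=
  ⟨Pi.single j 1, by simp [Pi.single_apply]⟩

end Representable

section ArithmeticGenerators

variable {a d K : ℕ}

theorem representable_mul_add_mul {M D : ℕ} (h : D ≤ M * K) :
    Representable (fun j : Fin (K + 1) => a + j * d) (M * a + D * d) := by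
  induction M generalizing D with
  | zero => simp_all [Representable.zero]
  | succ M ih =>
    obtain ⟨D', t, rfl, hD', ht⟩ : ∃ D' t, D = D' + t ∧ D' ≤ M * K ∧ t ≤ K :=
      ⟨D - min D K, min D K, by rw [succ_mul] at h; omega, by rw [succ_mul] at h; omega, by omega⟩
    convert (ih hD').add (Representable.generator ⟨t, by omega⟩) using 1
    dsimp only
    ring

theorem Representable.exists_mul_add_mul {n : ℕ}
    (h : Representable (fun j : Fin (K + 1) => a + j * d) n) :
    ∃ M D, n = M * a + D * d ∧ D ≤ M * K := by
  obtain ⟨x, rfl⟩ := h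
  refine ⟨∑ j, x j, ∑ j, x j * j, ?_, ?_⟩
  · simp only [sum_mul, ← sum_add_distrib, mul_add, mul_assoc]
  · rw [sum_mul]
    exact sum_le_sum fun j _ => Nat.mul_le_mul_left _ (Nat.lt_succ_iff.mp j.isLt)

/-- With `K = k - 1`, this is `m_{id mod a}` for `0 < i < a` (`isLeast_leastRep`). -/
def leastRep (a d K i : ℕ) : ℕ := i ⌈/⌉ K * a + i * d

theorem leastRep_zero : leastRep a d K 0 = 0 := by simp [leastRep]

theorem isLeast_leastRep (hK : 0 < K) (hcop : a.Coprime d) {i : ℕ} (hi : 0 < i) (hia : i < a) :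
    IsLeast {n | 0 < n ∧ Representable (fun j : Fin (K + 1) => a + j * d) n ∧
      n % a = i * d % a} (leastRep a d K i) := by
  have hceil : i ≤ K * (i ⌈/⌉ K) := le_smul_ceilDiv hK
  refine ⟨⟨?_, representable_mul_add_mul (by rw [mul_comm]; exact hceil), Nat.mul_add_mod' _ _ _⟩,
    ?_⟩
  · have : 0 < i ⌈/⌉ K := Nat.pos_of_ne_zero fun h0 => by simp [h0] at hceil; omega
    have : 0 < a := hi.trans hia
    unfold leastRep
    positivity
  · rintro n ⟨-, hrep, hmod⟩
    obtain ⟨M, D, rfl, hDM⟩ := hrep.exists_mul_add_mul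
    rw [Nat.mul_add_mod'] at hmod
    have hDi : D % a = i := by
      rw [Nat.ModEq.cancel_right_of_coprime hcop hmod, Nat.mod_eq_of_lt hia]
    have hiD : i ≤ D := hDi ▸ Nat.mod_le D a
    have hcM : i ⌈/⌉ K ≤ M := (ceilDiv_le_iff_le_mul hK).mpr (by rw [mul_comm]; omega)
    exact Nat.add_le_add (Nat.mul_le_mul_right a hcM) (Nat.mul_le_mul_right d hiD)

theorem sum_range_comp_mul_mod {M : Type*} [AddCommMonoid M] (hcop : a.Coprime d) (f : ℕ → M) :
    ∑ i ∈ range a, f (i * d % a) = ∑ i ∈ range a, f i := by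
  have hmaps : Set.MapsTo (fun i => i * d % a) (range a : Set ℕ) (range a) := fun i hi =>
    mem_range.mpr (Nat.mod_lt _ (pos_of_ne_zero (by rintro rfl; simp at hi)))
  have hinj : Set.InjOn (fun i => i * d % a) (range a : Set ℕ) := fun i hi j hj hij => by
    have := Nat.ModEq.cancel_right_of_coprime hcop hij
    rwa [Nat.ModEq, Nat.mod_eq_of_lt (mem_range.mp hi), Nat.mod_eq_of_lt (mem_range.mp hj)] at this
  exact sum_nbij _ hmaps hinj (surjOn_of_injOn_of_card_le _ hmaps hinj le_rfl) fun _ _ => rfl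

theorem sum_range_mul {M : Type*} [AddCommMonoid M] (f : ℕ → M) (q K : ℕ) :
    ∑ i ∈ range (q * K), f i = ∑ s ∈ range q, ∑ j ∈ range K, f (s * K + j) := by
  induction q with
  | zero => simp
  | succ q ih => rw [succ_mul, sum_range_add, ih, sum_range_succ]

theorem leastRep_mul_add_succ {s j : ℕ} (hj : j < K) :
    leastRep a d K (s * K + j + 1) = a + d + j * d + s * (a + K * d) := by
  have hceil : (s * K + j + 1) ⌈/⌉ K = s + 1 := by
    rw [ceilDiv_eq_add_pred_div]
    exact Nat.div_eq_of_lt_le (by rw [add_mul]; omega) (by rw [add_mul, add_mul]; omega)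
  rw [leastRep, hceil]
  ring

theorem sum_range_pow_leastRep (q r : ℕ) (hr : r ≤ K) (x : ℂ) :
    ∑ i ∈ range (q * K + r + 1), x ^ leastRep a d K i =
      1 + x ^ (a + d) * (∑ j ∈ range K, x ^ (j * d)) * (∑ s ∈ range q, x ^ (s * (a + K * d))) +
        x ^ (q * (a + K * d) + a + d) * (∑ t ∈ range r, x ^ (t * d)) := by
  rw [sum_range_succ', sum_range_add, sum_range_mul, leastRep_zero, pow_zero]
  have block : ∀ s ∈ range q, ∑ j ∈ range K, x ^ leastRep a d K (s * K + j + 1) =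
      x ^ (a + d) * (∑ j ∈ range K, x ^ (j * d)) * x ^ (s * (a + K * d)) := fun s _ => by
    rw [mul_sum, sum_mul]
    exact sum_congr rfl fun j hj => by
      rw [leastRep_mul_add_succ (mem_range.mp hj), pow_add, pow_add]
  have tail : ∀ t ∈ range r, x ^ leastRep a d K (q * K + t + 1) =
      x ^ (q * (a + K * d) + a + d) * x ^ (t * d) := fun t ht => by
    rw [leastRep_mul_add_succ (by have := mem_range.mp ht; omega), ← pow_add]
    ring_nf
  rw [sum_congr rfl block, sum_congr rfl tail, ← mul_sum, ← mul_sum]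
  ring

end ArithmeticGenerators

theorem stmt12_general (a d k q r : ℕ) (ha : 0 < a)
    (hk : 2 ≤ k) (hgcd : Nat.gcd a d = 1)
    (hqr : a - 1 = q * (k - 1) + r) (hr : r < k - 1)
    (m : ℕ → ℕ) (hm0 : m 0 = 0)
    (hm : ∀ i ∈ Finset.Icc 1 (a - 1),
      IsLeast {n : ℕ | 0 < n ∧
        Representable (fun j : Fin k => a + (j : ℕ) * d) n ∧ n % a = i} (m i))
    (P : ℂ → ℂ)
    (hP : P = fun x => 1 +
        x ^ (a + d) * (∑ j ∈ Finset.range (k - 1), x ^ (j * d)) *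
          (∑ s ∈ Finset.range q, x ^ (s * (a + (k - 1) * d))) +
        x ^ (q * (a + (k - 1) * d) + a + d) * (∑ t ∈ Finset.range r, x ^ (t * d)))
    (lam : ℂ) (ν : ℕ) :
    ∑ i ∈ Finset.range a, lam ^ (m i) * (m i : ℂ) ^ ν =
      ∑ i ∈ Finset.range (ν + 1), stirling2 ν i * lam ^ i * iteratedDeriv i P lam := by
  obtain ⟨K, rfl⟩ : ∃ K, k = K + 1 := ⟨k - 1, by omega⟩
  simp only [Nat.add_sub_cancel] at hqr hr hP
  have hP_sum : P = fun x => ∑ i ∈ range a, x ^ leastRep a d K i := by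
    rw [hP, show range a = range (q * K + r + 1) by congr 1; omega]
    exact funext fun x => (sum_range_pow_leastRep q r hr.le x).symm
  have hm_eq : ∀ i < a, m (i * d % a) = leastRep a d K i := by
    intro i hi
    rcases i.eq_zero_or_pos with rfl | hi0
    · simp [hm0, leastRep_zero]
    have hres : i * d % a ≠ 0 := fun h0 => by
      have := Nat.le_of_dvd hi0 (Nat.Coprime.dvd_of_dvd_mul_right hgcd (Nat.dvd_of_mod_eq_zero h0))
      omega
    exact (hm _ (mem_Icc.mpr ⟨pos_of_ne_zero hres, by have := Nat.mod_lt (i * d) ha; omega⟩)).unique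
      (isLeast_leastRep (by omega) hgcd hi0 hi)
  rw [hP_sum, sum_stirling2_mul_iteratedDeriv_sum_pow, ← sum_range_comp_mul_mod hgcd]
  exact sum_congr rfl fun i hi => by rw [hm_eq i (mem_range.mp hi)]

/-- Weighted power sums of the minimal representatives via derivatives of the
polynomial `P`. -/
theorem stmt12 (a d k q r : ℕ) (ha : 0 < a) (hd : 0 < d)
    (hk : 2 ≤ k) (hka : k ≤ a) (hgcd : Nat.gcd a d = 1)
    (hqr : a - 1 = q * (k - 1) + r) (hr : r < k - 1)
    (m : ℕ → ℕ) (hm0 : m 0 = 0)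
    (hm : ∀ i ∈ Finset.Icc 1 (a - 1),
      IsLeast {n : ℕ | 0 < n ∧
        Representable (fun j : Fin k => a + (j : ℕ) * d) n ∧ n % a = i} (m i))
    (P : ℂ → ℂ)
    (hP : P = fun x => 1 +
        x ^ (a + d) * (∑ j ∈ Finset.range (k - 1), x ^ (j * d)) *
          (∑ s ∈ Finset.range q, x ^ (s * (a + (k - 1) * d))) +
        x ^ (q * (a + (k - 1) * d) + a + d) * (∑ t ∈ Finset.range r, x ^ (t * d)))
    (lam : ℂ) (ν : ℕ) :
    ∑ i ∈ Finset.range a, lam ^ (m i) * (m i : ℂ) ^ ν =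
      ∑ i ∈ Finset.range (ν + 1), stirling2 ν i * lam ^ i * iteratedDeriv i P lam :=
  stmt12_general a d k q r ha hk hgcd hqr hr m hm0 hm P hP lam ν
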